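/- arXiv:1705.08763 — 3 statements merged into one kernel-verified Lean document; each statement's English description precedes it below -/
import Mathlib

section
/- Let a be continuously differentiable with 0 < m ≤ a(x) ≤ M and m₁ ≤ a'(x) ≤ M₁ for all x. Let G(x) = ∫₀ˣ a(s) s^{2n+1} ds. Then there is a constant C > 0 such that for all x ≠ 0, |G(x) G''(x) / G'(x)²| ≤ C (|x| + 1). -/
open MeasureTheory intervalIntegral

theorem stmt_5 (n : ℕ) (hn : 1 ≤ n) (a : ℝ → ℝ) (ha : ContDiff ℝ 1 a)
    (m M m₁ M₁ : ℝ) (hm : 0 < m)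
    (hbound : ∀ x : ℝ, m ≤ a x ∧ a x ≤ M)
    (hbound' : ∀ x : ℝ, m₁ ≤ deriv a x ∧ deriv a x ≤ M₁)
    (G : ℝ → ℝ) (hG : ∀ x : ℝ, G x = ∫ s in (0:ℝ)..x, a s * s ^ (2 * n + 1)) :
    ∃ C > 0, ∀ x : ℝ, x ≠ 0 →
      |G x * (deriv a x * x ^ (2 * n + 1) + (2 * n + 1) * a x * x ^ (2 * n)) /
        (a x * x ^ (2 * n + 1)) ^ 2| ≤ C * (|x| + 1) := by
  set K : ℝ := max |m₁| |M₁| with hK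
  have hK0 : 0 ≤ K := le_trans (abs_nonneg m₁) (le_max_left _ _)
  have hmM : m ≤ M := le_trans (hbound 0).1 (hbound 0).2
  have hM : 0 < M := lt_of_lt_of_le hm hmM
  have hC1 : 0 < K + (2 * n + 1) * M := by positivity
  refine ⟨M * (K + (2 * n + 1) * M) / m ^ 2, by positivity, ?_⟩
  intro x hx
  have hderiv : ∀ y : ℝ, |deriv a y| ≤ K := by
    intro y
    rcases hbound' y with ⟨h1, h2⟩
    rw [abs_le]
    constructor
    · have := neg_abs_le m₁
      calc -K ≤ -|m₁| := neg_le_neg (le_max_left _ _)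
        _ ≤ m₁ := neg_abs_le m₁
        _ ≤ _ := h1
    · exact le_trans h2 (le_trans (le_abs_self M₁) (le_max_right _ _))
  -- bound on G
  have hGbound : |G x| ≤ M * |x| ^ (2 * n + 1) * |x| := by
    rw [hG x]
    have := intervalIntegral.norm_integral_le_of_norm_le_const
      (a := (0:ℝ)) (b := x) (C := M * |x| ^ (2 * n + 1))
      (f := fun s => a s * s ^ (2 * n + 1)) ?_
    · simpa using this
    · intro s hs
      have hs' : |s| ≤ |x| := by
        rcases Set.mem_uIoc.1 hs with h | h
        · rw [abs_of_pos h.1, abs_of_pos (lt_of_lt_of_le h.1 h.2)]; exact h.2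
        · rw [abs_of_nonpos h.2, abs_of_neg (lt_of_lt_of_le h.1 h.2)]
          linarith [h.1]
      have h1 : |a s| ≤ M := by
        rw [abs_of_pos (lt_of_lt_of_le hm (hbound s).1)]; exact (hbound s).2
      calc ‖a s * s ^ (2 * n + 1)‖ = |a s| * |s| ^ (2 * n + 1) := by
            rw [Real.norm_eq_abs, abs_mul, abs_pow]
        _ ≤ M * |x| ^ (2 * n + 1) := by
            apply mul_le_mul h1 (pow_le_pow_left₀ (abs_nonneg s) hs' _) (by positivity)
              (le_of_lt hM)
  -- bound on second factor
  have hG2 : |deriv a x * x ^ (2 * n + 1) + (2 * n + 1) * a x * x ^ (2 * n)| ≤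
      (K + (2 * n + 1) * M) * |x| ^ (2 * n) * (|x| + 1) := by
    have hax : |a x| ≤ M := by
      rw [abs_of_pos (lt_of_lt_of_le hm (hbound x).1)]; exact (hbound x).2
    calc |deriv a x * x ^ (2 * n + 1) + (2 * n + 1) * a x * x ^ (2 * n)|
        ≤ |deriv a x * x ^ (2 * n + 1)| + |(2 * n + 1) * a x * x ^ (2 * n)| :=
          abs_add_le _ _
      _ = |deriv a x| * |x| ^ (2 * n) * |x| + (2 * n + 1) * |a x| * |x| ^ (2 * n) := by
          rw [abs_mul, abs_mul, abs_mul, abs_pow, abs_pow, pow_succ]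
          have : |((2 : ℝ) * n + 1)| = 2 * n + 1 := by
            rw [abs_of_pos]; positivity
          rw [this]; ring
      _ ≤ K * |x| ^ (2 * n) * |x| + (2 * n + 1) * M * |x| ^ (2 * n) := by
          have h1 : |deriv a x| * |x| ^ (2 * n) * |x| ≤ K * |x| ^ (2 * n) * |x| := by
            have := hderiv x
            have h0 : (0:ℝ) ≤ |x| ^ (2 * n) * |x| := by positivity
            nlinarith [abs_nonneg (deriv a x)]
          have h2 : (2 * (n:ℝ) + 1) * |a x| * |x| ^ (2 * n) ≤
              (2 * n + 1) * M * |x| ^ (2 * n) := by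
            have h0 : (0:ℝ) ≤ |x| ^ (2 * n) := by positivity
            have := mul_le_mul_of_nonneg_left (mul_le_mul_of_nonneg_right hax h0)
              (show (0:ℝ) ≤ 2 * n + 1 by positivity)
            nlinarith
          linarith
      _ ≤ (K + (2 * n + 1) * M) * |x| ^ (2 * n) * (|x| + 1) := by
          have h0 : (0:ℝ) ≤ |x| ^ (2 * n) := by positivity
          nlinarith [mul_nonneg hK0 h0,
            mul_nonneg (mul_nonneg (show (0:ℝ) ≤ (2 * n + 1) * M by positivity) h0)
              (abs_nonneg x)]
  -- positivity of denominator
  have hxpos : 0 < |x| := abs_pos.2 hx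
  have hden : (a x * x ^ (2 * n + 1)) ^ 2 = (a x * x ^ (2 * n + 1)) ^ 2 := rfl
  have hdenabs : |(a x * x ^ (2 * n + 1)) ^ 2| = (a x) ^ 2 * |x| ^ (2 * (2 * n + 1)) := by
    rw [abs_pow, abs_mul, abs_pow, abs_of_pos (lt_of_lt_of_le hm (hbound x).1)]
    rw [mul_pow, ← pow_mul, mul_comm (2 * n + 1) 2]
  have hdenpos : 0 < (a x) ^ 2 * |x| ^ (2 * (2 * n + 1)) := by
    have : 0 < a x := lt_of_lt_of_le hm (hbound x).1
    positivity
  rw [abs_div, abs_mul, hdenabs, div_le_iff₀ hdenpos]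
  have key : |G x| * |deriv a x * x ^ (2 * n + 1) + (2 * n + 1) * a x * x ^ (2 * n)| ≤
      (M * |x| ^ (2 * n + 1) * |x|) * ((K + (2 * n + 1) * M) * |x| ^ (2 * n) * (|x| + 1)) := by
    apply mul_le_mul hGbound hG2 (abs_nonneg _) (by positivity)
  refine le_trans key ?_
  have hpow : |x| ^ (2 * n + 1) * |x| * (|x| ^ (2 * n)) = |x| ^ (2 * (2 * n + 1)) := by
    rw [← pow_succ, ← pow_add]
    ring_nf
  have hax2 : m ^ 2 ≤ (a x) ^ 2 := by
    have h1 := (hbound x).1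
    nlinarith
  have hm2 : (0:ℝ) < m ^ 2 := by positivity
  rw [div_mul_eq_mul_div, div_mul_eq_mul_div, le_div_iff₀ hm2]
  calc M * |x| ^ (2 * n + 1) * |x| * ((K + (2 * n + 1) * M) * |x| ^ (2 * n) * (|x| + 1)) * m ^ 2
      = M * (K + (2 * n + 1) * M) * (|x| + 1) * (m ^ 2 * |x| ^ (2 * (2 * n + 1))) := by
        rw [← hpow]; ring
    _ ≤ M * (K + (2 * n + 1) * M) * (|x| + 1) * ((a x) ^ 2 * |x| ^ (2 * (2 * n + 1))) := by
        exact mul_le_mul_of_nonneg_left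
          (mul_le_mul_of_nonneg_right hax2 (by positivity)) (by positivity)
end

section
/- Let G(x) = ∫₀ˣ a(s) s^{2n+1} ds with a continuous and 0 < m ≤ a ≤ M. For h > 0 define I(h) = 2√2 ∫_{x₋(h)}^{x₊(h)} √(h − G(x)) dx, where G(x₋(h)) = G(x₊(h)) = h, x₋(h) < 0 < x₊(h). Then there exist constants c₁, c₂ > 0 and h₀ > 0 such that for all h ≥ h₀, c₁ h^{1/2 + 1/(2n+2)} ≤ I(h) ≤ c₂ h^{1/2 + 1/(2n+2)}. -/
/-!
Comparing `a` with the constants `m ≤ a ≤ M` gives `m x^N / N ≤ G x ≤ M x^N / N` with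
`N = 2n + 2`, so both turning points `x₊(h)` and `|x₋(h)|` are of order `h^(1/N)`.
The integrand `√(h - G)` is at most `√h` everywhere, which gives the upper bound. For the
lower bound, `G ≤ h / 2` on `[0, (N h / 2M)^(1/N)]`, an interval of length of order
`h^(1/N)` inside `[x₋(h), x₊(h)]` on which the integrand is at least `√(h / 2)`.
-/

open intervalIntegral

lemma integral_zero_nonneg_of_sign {f : ℝ → ℝ} (hpos : ∀ s, 0 ≤ s → 0 ≤ f s)
    (hneg : ∀ s ≤ 0, f s ≤ 0) (x : ℝ) : 0 ≤ ∫ s in (0:ℝ)..x, f s := by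
  rcases le_total 0 x with hx | hx
  · exact integral_nonneg hx fun s hs => hpos s hs.1
  · rw [integral_symm, ← integral_neg]
    exact integral_nonneg hx fun s hs => neg_nonneg.2 (hneg s hs.2)

lemma integral_mul_pow_mono_of_odd {f g : ℝ → ℝ} (hf : Continuous f) (hg : Continuous g)
    (hfg : ∀ s, f s ≤ g s) {k : ℕ} (hk : Odd k) (x : ℝ) :
    ∫ s in (0:ℝ)..x, f s * s ^ k ≤ ∫ s in (0:ℝ)..x, g s * s ^ k := by
  have hgk : Continuous fun s => g s * s ^ k := by fun_prop
  have hfk : Continuous fun s => f s * s ^ k := by fun_prop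
  rw [← sub_nonneg, ← integral_sub (hgk.intervalIntegrable _ _) (hfk.intervalIntegrable _ _)]
  refine integral_zero_nonneg_of_sign (fun s hs => ?_) (fun s hs => ?_) x
  · rw [← sub_mul]
    exact mul_nonneg (sub_nonneg.2 (hfg s)) (pow_nonneg hs k)
  · rw [← sub_mul]
    exact mul_nonpos_of_nonneg_of_nonpos (sub_nonneg.2 (hfg s)) (hk.pow_nonpos hs)

lemma integral_const_mul_pow (c : ℝ) (k : ℕ) (x : ℝ) :
    ∫ s in (0:ℝ)..x, c * s ^ k = c / (k + 1 : ℕ) * x ^ (k + 1) := by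
  rw [integral_const_mul, integral_pow, zero_pow k.succ_ne_zero]
  push_cast
  ring

lemma abs_le_rpow_inv_of_pow_le {N : ℕ} (hN : Even N) (hN0 : N ≠ 0) {x y : ℝ}
    (hxy : x ^ N ≤ y) : |x| ≤ y ^ (N⁻¹ : ℝ) :=
  calc |x| = (|x| ^ N) ^ (N⁻¹ : ℝ) := (Real.pow_rpow_inv_natCast (abs_nonneg x) hN0).symm
    _ ≤ y ^ (N⁻¹ : ℝ) :=
      Real.rpow_le_rpow (pow_nonneg (abs_nonneg x) N) (hN.pow_abs x ▸ hxy) (by positivity)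

lemma rpow_inv_le_of_le_pow {N : ℕ} (hN0 : N ≠ 0) {x y : ℝ} (hx : 0 ≤ x) (hy : 0 ≤ y)
    (hyx : y ≤ x ^ N) : y ^ (N⁻¹ : ℝ) ≤ x :=
  calc y ^ (N⁻¹ : ℝ) ≤ (x ^ N) ^ (N⁻¹ : ℝ) := Real.rpow_le_rpow hy hyx (by positivity)
    _ = x := Real.pow_rpow_inv_natCast hx hN0

section LevelArea

variable {F : ℝ → ℝ} {N : ℕ} {h p q : ℝ}

lemma integral_sqrt_sub_le_of_mul_pow_le {c : ℝ} (hc : 0 < c) (hN : Even N) (hN0 : N ≠ 0)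
    (hF : ∀ x, c * x ^ N ≤ F x) (hp : F p = h) (hq : F q = h) :
    ∫ x in q..p, √(h - F x) ≤ 2 * (h / c) ^ (N⁻¹ : ℝ) * √h := by
  have hF0 (x : ℝ) : 0 ≤ F x := (mul_nonneg hc.le (hN.pow_nonneg x)).trans (hF x)
  have habs {x : ℝ} (hx : F x = h) : |x| ≤ (h / c) ^ (N⁻¹ : ℝ) :=
    abs_le_rpow_inv_of_pow_le hN hN0 ((le_div_iff₀' hc).2 (hx ▸ hF x))
  calc ∫ x in q..p, √(h - F x) ≤ ‖∫ x in q..p, √(h - F x)‖ := Real.le_norm_self _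
    _ ≤ √h * |p - q| := norm_integral_le_of_norm_le_const fun x _ => by
        rw [Real.norm_of_nonneg (Real.sqrt_nonneg _)]
        exact Real.sqrt_le_sqrt (by linarith [hF0 x])
    _ ≤ √h * (2 * (h / c) ^ (N⁻¹ : ℝ)) := by
        gcongr
        linarith [abs_sub p q, habs hp, habs hq]
    _ = 2 * (h / c) ^ (N⁻¹ : ℝ) * √h := by ring

lemma le_integral_sqrt_sub_of_le_mul_pow {C : ℝ} (hC : 0 < C) (hN0 : N ≠ 0)
    (hFc : Continuous F) (hF : ∀ x, F x ≤ C * x ^ N) (hh : 0 ≤ h) (hp0 : 0 < p)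
    (hp : F p = h) (hq0 : q ≤ 0) :
    (h / (2 * C)) ^ (N⁻¹ : ℝ) * √(h / 2) ≤ ∫ x in q..p, √(h - F x) := by
  set b := (h / (2 * C)) ^ (N⁻¹ : ℝ)
  have hb0 : 0 ≤ b := by positivity
  have hbp : b ≤ p :=
    calc b ≤ (h / C) ^ (N⁻¹ : ℝ) :=
          Real.rpow_le_rpow (by positivity) (by gcongr; linarith) (by positivity)
      _ ≤ p := rpow_inv_le_of_le_pow hN0 hp0.le (by positivity)
          ((div_le_iff₀' hC).2 (hp ▸ hF p))
  have hFb : ∀ x ∈ Set.Icc 0 b, F x ≤ h / 2 := fun x hx =>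
    calc F x ≤ C * x ^ N := hF x
      _ ≤ C * b ^ N := by gcongr; exacts [hx.1, hx.2]
      _ = h / 2 := by
          rw [Real.rpow_inv_natCast_pow (by positivity) hN0]
          field_simp
  have hint : Continuous fun x => √(h - F x) := (continuous_const.sub hFc).sqrt
  calc b * √(h / 2) = ∫ _ in (0:ℝ)..b, √(h / 2) := by
        rw [integral_const, sub_zero, smul_eq_mul]
    _ ≤ ∫ x in (0:ℝ)..b, √(h - F x) :=
        integral_mono_on hb0 intervalIntegrable_const (hint.intervalIntegrable _ _)
          fun x hx => Real.sqrt_le_sqrt (by linarith [hFb x hx])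
    _ ≤ ∫ x in q..p, √(h - F x) :=
        integral_mono_interval hq0 hb0 hbp
          (Filter.Eventually.of_forall fun x => Real.sqrt_nonneg _)
          (hint.intervalIntegrable _ _)

end LevelArea

theorem stmt_7_general (n : ℕ) (a : ℝ → ℝ) (hcont : Continuous a)
    (m M : ℝ) (hm : 0 < m)
    (hbound : ∀ s : ℝ, m ≤ a s ∧ a s ≤ M)
    (G : ℝ → ℝ) (hG : ∀ x : ℝ, G x = ∫ s in (0:ℝ)..x, a s * s ^ (2 * n + 1))
    (xp xm : ℝ → ℝ)
    (hxp : ∀ h : ℝ, 0 < h → 0 < xp h ∧ G (xp h) = h)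
    (hxm : ∀ h : ℝ, 0 < h → xm h < 0 ∧ G (xm h) = h)
    (I : ℝ → ℝ)
    (hI : ∀ h : ℝ, 0 < h →
      I h = 2 * Real.sqrt 2 * ∫ x in (xm h)..(xp h), Real.sqrt (h - G x)) :
    ∃ c₁ > (0:ℝ), ∃ c₂ > (0:ℝ), ∃ h₀ > (0:ℝ), ∀ h : ℝ, h₀ ≤ h →
      c₁ * h ^ ((1:ℝ) / 2 + 1 / (2 * n + 2)) ≤ I h ∧
      I h ≤ c₂ * h ^ ((1:ℝ) / 2 + 1 / (2 * n + 2)) := by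
  set N := 2 * n + 1 + 1
  have hN0 : N ≠ 0 := (2 * n + 1).succ_ne_zero
  have hM : 0 < M := hm.trans_le ((hbound 0).1.trans (hbound 0).2)
  have hGc : Continuous G := by
    rw [funext hG]
    exact continuous_primitive (fun u v => (by fun_prop : Continuous fun s =>
      a s * s ^ (2 * n + 1)).intervalIntegrable u v) 0
  have hGlow (x : ℝ) : m / N * x ^ N ≤ G x := by
    rw [hG, ← integral_const_mul_pow]
    exact integral_mul_pow_mono_of_odd continuous_const hcont (fun s => (hbound s).1)
      (odd_two_mul_add_one n) x
  have hGup (x : ℝ) : G x ≤ M / N * x ^ N := by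
    rw [hG, ← integral_const_mul_pow]
    exact integral_mul_pow_mono_of_odd hcont continuous_const (fun s => (hbound s).2)
      (odd_two_mul_add_one n) x
  set e : ℝ := (N : ℝ)⁻¹
  refine ⟨2 / (2 * (M / N)) ^ e, by positivity, 4 * √2 / (m / N) ^ e, by positivity, 1, one_pos,
    fun h hh => ?_⟩
  have hh0 : 0 < h := one_pos.trans_le hh
  obtain ⟨hxp0, hGxp⟩ := hxp h hh0
  obtain ⟨hxm0, hGxm⟩ := hxm h hh0
  have hpow : h ^ ((1:ℝ) / 2 + 1 / (2 * n + 2)) = √h * h ^ e := by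
    rw [show (1:ℝ) / 2 + 1 / (2 * n + 2) = 1 / 2 + e by simp [e, N]; ring,
      Real.rpow_add hh0, Real.sqrt_eq_rpow]
  rw [hI h hh0, hpow]
  constructor
  · calc 2 / (2 * (M / N)) ^ e * (√h * h ^ e)
          = 2 * √2 * ((h / (2 * (M / N))) ^ e * √(h / 2)) := by
            rw [Real.div_rpow hh0.le (by positivity), Real.sqrt_div hh0.le]
            field_simp
      _ ≤ _ := by
            gcongr
            exact le_integral_sqrt_sub_of_le_mul_pow (by positivity) hN0 hGc hGup hh0.le hxp0 hGxp
              hxm0.le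
  · calc 2 * √2 * ∫ x in xm h..xp h, √(h - G x)
          ≤ 2 * √2 * (2 * (h / (m / N)) ^ e * √h) := by
            gcongr
            exact integral_sqrt_sub_le_of_mul_pow_le (by positivity) ⟨n + 1, by ring⟩ hN0 hGlow
              hGxp hGxm
      _ = 4 * √2 / (m / N) ^ e * (√h * h ^ e) := by
            rw [Real.div_rpow hh0.le (by positivity)]
            ring

theorem stmt_7 (n : ℕ) (hn : 1 ≤ n) (a : ℝ → ℝ) (hcont : Continuous a)
    (m M : ℝ) (hm : 0 < m) (hmM : m ≤ M)
    (hbound : ∀ s : ℝ, m ≤ a s ∧ a s ≤ M)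
    (G : ℝ → ℝ) (hG : ∀ x : ℝ, G x = ∫ s in (0:ℝ)..x, a s * s ^ (2 * n + 1))
    (xp xm : ℝ → ℝ)
    (hxp : ∀ h : ℝ, 0 < h → 0 < xp h ∧ G (xp h) = h)
    (hxm : ∀ h : ℝ, 0 < h → xm h < 0 ∧ G (xm h) = h)
    (I : ℝ → ℝ)
    (hI : ∀ h : ℝ, 0 < h →
      I h = 2 * Real.sqrt 2 * ∫ x in (xm h)..(xp h), Real.sqrt (h - G x)) :
    ∃ c₁ > (0:ℝ), ∃ c₂ > (0:ℝ), ∃ h₀ > (0:ℝ), ∀ h : ℝ, h₀ ≤ h →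
      c₁ * h ^ ((1:ℝ) / 2 + 1 / (2 * n + 2)) ≤ I h ∧
      I h ≤ c₂ * h ^ ((1:ℝ) / 2 + 1 / (2 * n + 2)) :=
  stmt_7_general n a hcont m M hm hbound G hG xp xm hxp hxm I hI
end

section
/- Suppose a sequence of positive reals (I_k) satisfies I_{k+1} ≥ C · (τ τ')^{−(k+1)} · I_k^{(2m+2)/(n+2)} for all k ≥ 0, where C > 0, τ, τ' ≥ 1, n ≥ 1, and n + 2 ≤ 2m + 1 ≤ 2n − 1 (so (2m+2)/(n+2) > 1). Let l = (2m+1)/(n+2) + 1/(2(n+2)); then l > 1, and there exists I* > 0 (depending on C, τ, τ', m, n) such that whenever I₀ ≥ I*, one has I_k ≥ I₀^{l^k} for all k ≥ 0. -/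
lemma stmt_14_aux (l δ C T : ℝ) (hδ : 0 < δ) (hδ1 : δ ≤ 1) (hl : 1 + δ ≤ l)
    (hC : 0 < C) (hT : 1 ≤ T) :
    ∃ Istar > (0:ℝ), ∀ I : ℕ → ℝ, (∀ k, 0 < I k) →
      (∀ k : ℕ, C * T ^ (-((k:ℝ) + 1)) * I k ^ (l + δ) ≤ I (k + 1)) →
      Istar ≤ I 0 → ∀ k : ℕ, I 0 ^ (l ^ k) ≤ I k := by
  have hT0 : (0:ℝ) < T := lt_of_lt_of_le one_pos hT
  set m' := min C 1 with hm'
  have hm'0 : 0 < m' := lt_min hC one_pos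
  have hm'1 : m' ≤ 1 := min_le_right _ _
  have hm'C : m' ≤ C := min_le_left _ _
  have hTm' : (0:ℝ) ≤ T / m' := by positivity
  refine ⟨max 1 ((T / m') ^ (1/δ^2)), lt_of_lt_of_le one_pos (le_max_left _ _), ?_⟩
  intro I hIpos hI hI0 k
  have hI01 : (1:ℝ) ≤ I 0 := le_trans (le_max_left _ _) hI0
  have hI00 : (0:ℝ) < I 0 := lt_of_lt_of_le one_pos hI01
  have hbase : T / m' ≤ I 0 ^ (δ^2) := by
    have h1 : (T/m') ^ (1/δ^2) ≤ I 0 := le_trans (le_max_right _ _) hI0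
    have h2 : ((T/m') ^ (1/δ^2)) ^ (δ^2) ≤ I 0 ^ (δ^2) :=
      Real.rpow_le_rpow (Real.rpow_nonneg hTm' _) h1 (by positivity)
    rw [← Real.rpow_mul hTm'] at h2
    have h3 : (1/δ^2) * δ^2 = 1 := by
      field_simp
    rwa [h3, Real.rpow_one] at h2
  have key : ∀ j : ℕ, 1 ≤ C * T ^ (-((j:ℝ) + 1)) * I 0 ^ (δ * l ^ j) := by
    intro j
    have hlj : (j:ℝ) * δ + 1 ≤ l ^ j := by
      calc (j:ℝ)*δ + 1 = 1 + j*δ := by ring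
      _ ≤ (1+δ)^j := one_add_mul_le_pow (by linarith) j
      _ ≤ l^j := pow_le_pow_left₀ (by positivity) hl j
    have hexp : ((j:ℝ)+1) * δ^2 ≤ δ * l^j := by
      have h1 : δ * ((j:ℝ)*δ + 1) ≤ δ * l^j := mul_le_mul_of_nonneg_left hlj hδ.le
      nlinarith [mul_le_mul_of_nonneg_left hδ1 hδ.le]
    have h3 : I 0 ^ (((j:ℝ)+1) * δ^2) ≤ I 0 ^ (δ * l ^ j) :=
      Real.rpow_le_rpow_of_exponent_le hI01 hexp
    have h4 : (T/m') ^ ((j:ℝ)+1) ≤ I 0 ^ (((j:ℝ)+1) * δ^2) := by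
      rw [mul_comm, Real.rpow_mul hI00.le]
      exact Real.rpow_le_rpow hTm' hbase (by positivity)
    have hmr : m' ^ ((j:ℝ)+1) ≤ m' := by
      have := Real.rpow_le_rpow_of_exponent_ge hm'0 hm'1
        (by simp [le_add_iff_nonneg_left] : (1:ℝ) ≤ (j:ℝ)+1)
      simpa [Real.rpow_one] using this
    have hmrpos : 0 < m' ^ ((j:ℝ)+1) := Real.rpow_pos_of_pos hm'0 _
    have h5 : T ^ ((j:ℝ)+1) / C ≤ (T/m') ^ ((j:ℝ)+1) := by
      rw [Real.div_rpow hT0.le hm'0.le]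
      exact div_le_div_of_nonneg_left (Real.rpow_nonneg hT0.le _) hmrpos
        (le_trans hmr hm'C)
    have hTp : 0 < T ^ ((j:ℝ)+1) := Real.rpow_pos_of_pos hT0 _
    have h6 : T ^ ((j:ℝ)+1) ≤ C * I 0 ^ (δ * l ^ j) := by
      have h7 := le_trans h5 (le_trans h4 h3)
      have h8 := mul_le_mul_of_nonneg_left h7 hC.le
      calc T ^ ((j:ℝ)+1) = C * (T ^ ((j:ℝ)+1) / C) := by field_simp
      _ ≤ C * I 0 ^ (δ * l ^ j) := h8
    rw [Real.rpow_neg hT0.le]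
    have heq : C * (T ^ ((j:ℝ)+1))⁻¹ * I 0 ^ (δ * l ^ j)
        = (C * I 0 ^ (δ * l ^ j)) / T ^ ((j:ℝ)+1) := by ring
    rw [heq, le_div_iff₀ hTp, one_mul]
    exact h6
  induction k with
  | zero => simp
  | succ k ih =>
    have hIk := hIpos k
    have hIk0 : 0 < I 0 ^ (l ^ k) := Real.rpow_pos_of_pos hI00 _
    have h1 : (I 0 ^ (l ^ k)) ^ (l + δ) ≤ I k ^ (l + δ) :=
      Real.rpow_le_rpow hIk0.le ih (by linarith)
    have h2 : (I 0 ^ (l ^ k)) ^ (l + δ) = I 0 ^ (l ^ (k+1)) * I 0 ^ (δ * l ^ k) := by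
      rw [← Real.rpow_mul hI00.le, ← Real.rpow_add hI00]
      congr 1
      ring
    calc I 0 ^ (l ^ (k+1)) = 1 * I 0 ^ (l ^ (k+1)) := (one_mul _).symm
    _ ≤ (C * T ^ (-((k:ℝ)+1)) * I 0 ^ (δ * l ^ k)) * I 0 ^ (l ^ (k+1)) :=
        mul_le_mul_of_nonneg_right (key k) (Real.rpow_pos_of_pos hI00 _).le
    _ = C * T ^ (-((k:ℝ)+1)) * (I 0 ^ (l ^ (k+1)) * I 0 ^ (δ * l ^ k)) := by ring
    _ = C * T ^ (-((k:ℝ)+1)) * (I 0 ^ (l ^ k)) ^ (l + δ) := by rw [h2]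
    _ ≤ C * T ^ (-((k:ℝ)+1)) * I k ^ (l + δ) := by
        apply mul_le_mul_of_nonneg_left h1
        positivity
    _ ≤ I (k+1) := hI k

theorem stmt_14 (m n : ℕ) (hmn₁ : n + 2 ≤ 2 * m + 1) (hmn₂ : 2 * m + 1 ≤ 2 * n - 1)
    (hn : 1 ≤ n) (C τ τ' : ℝ) (hC : 0 < C) (hτ : 1 ≤ τ) (hτ' : 1 ≤ τ') :
    (1:ℝ) < (2 * (m:ℝ) + 1) / (n + 2) + 1 / (2 * (n + 2)) ∧
    ∃ Istar > (0:ℝ), ∀ I : ℕ → ℝ, (∀ k, 0 < I k) →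
      (∀ k : ℕ, C * (τ * τ') ^ (-((k:ℝ) + 1)) * I k ^ ((2 * (m:ℝ) + 2) / (n + 2)) ≤ I (k + 1)) →
      Istar ≤ I 0 →
      ∀ k : ℕ, I 0 ^ (((2 * (m:ℝ) + 1) / (n + 2) + 1 / (2 * (n + 2))) ^ k) ≤ I k := by
  have hn2 : (0:ℝ) < (n:ℝ) + 2 := by positivity
  have hcast : ((n:ℝ) + 2) ≤ 2*(m:ℝ)+1 := by exact_mod_cast hmn₁
  have hl1 : (1:ℝ) ≤ (2*(m:ℝ)+1)/((n:ℝ)+2) := (one_le_div hn2).mpr hcast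
  have hδ : (0:ℝ) < 1/(2*((n:ℝ)+2)) := by positivity
  constructor
  · linarith
  · have hδ1 : (1:ℝ)/(2*((n:ℝ)+2)) ≤ 1 := by
      rw [div_le_one (by positivity)]
      linarith
    have hl : 1 + 1/(2*((n:ℝ)+2)) ≤ (2*(m:ℝ)+1)/((n:ℝ)+2) + 1/(2*((n:ℝ)+2)) := by
      linarith
    have hT : (1:ℝ) ≤ τ * τ' := le_trans hτ (le_mul_of_one_le_right (by linarith) hτ')
    have he : (2*(m:ℝ)+2)/((n:ℝ)+2)
        = ((2*(m:ℝ)+1)/((n:ℝ)+2) + 1/(2*((n:ℝ)+2))) + 1/(2*((n:ℝ)+2)) := by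
      field_simp
      ring
    obtain ⟨Istar, hst, h⟩ := stmt_14_aux ((2*(m:ℝ)+1)/((n:ℝ)+2) + 1/(2*((n:ℝ)+2)))
      (1/(2*((n:ℝ)+2))) C (τ*τ') hδ hδ1 hl hC hT
    refine ⟨Istar, hst, ?_⟩
    intro I hpos hI hI0
    exact h I hpos (by rw [← he] at *; exact hI) hI0
end
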